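/- arXiv:math-ph/0204022 — 2 statements merged into one kernel-verified Lean document; each statement's English description precedes it below -/
import Mathlib

section
/- The vector (κ_⊙, κ_★, κ_A, κ_D, κ_J, κ_Q, κ_K) = ((-11+7τ)/5, (-29+18τ)/5, 2-τ, -3+2τ, 5-3τ, -8+5τ, 13-8τ), with τ = (1+√5)/2, is an eigenvector of the matrix M = [[0,1,0,0,0,1,1],[1,0,0,0,0,0,0],[5/2,5/2,1/2,1/2,3/2,3/2,2],[5/2,0,0,1,3/2,0,0],[0,0,1,0,0,0,0],[0,0,0,1,0,0,0],[0,0,0,0,1,0,0]] with eigenvalue (3+√5)/2, and its components sum to 1. -/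
theorem vertex_frequencies_eigenvector :
    let τ : ℝ := (1 + Real.sqrt 5) / 2
    let M : Matrix (Fin 7) (Fin 7) ℝ := Matrix.of
      ![![0, 1, 0, 0, 0, 1, 1],
        ![1, 0, 0, 0, 0, 0, 0],
        ![5/2, 5/2, 1/2, 1/2, 3/2, 3/2, 2],
        ![5/2, 0, 0, 1, 3/2, 0, 0],
        ![0, 0, 1, 0, 0, 0, 0],
        ![0, 0, 0, 1, 0, 0, 0],
        ![0, 0, 0, 0, 1, 0, 0]]
    let κ : Fin 7 → ℝ :=
      ![(-11 + 7*τ)/5, (-29 + 18*τ)/5, 2 - τ, -3 + 2*τ, 5 - 3*τ, -8 + 5*τ, 13 - 8*τ]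
    M.mulVec κ = ((3 + Real.sqrt 5) / 2) • κ ∧ ∑ i, κ i = 1 := by
  intro τ M κ
  have h5 : Real.sqrt 5 * Real.sqrt 5 = 5 := Real.mul_self_sqrt (by norm_num)
  constructor
  · funext i
    fin_cases i <;>
      simp [M, κ, τ, Matrix.mulVec, dotProduct, Fin.sum_univ_succ,
        show (5:Fin 7)=(4:Fin 6).succ from rfl, show (6:Fin 7)=(5:Fin 6).succ from rfl,
        show (5:Fin 6)=(4:Fin 5).succ from rfl, show (4:Fin 6)=(3:Fin 5).succ from rfl,
        show (4:Fin 5)=(3:Fin 4).succ from rfl, show (3:Fin 5)=(2:Fin 4).succ from rfl,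
        Matrix.cons_val_succ] <;>
      nlinarith [h5]
  · simp [κ, τ, Fin.sum_univ_succ,
        show (5:Fin 7)=(4:Fin 6).succ from rfl, show (6:Fin 7)=(5:Fin 6).succ from rfl,
        show (5:Fin 6)=(4:Fin 5).succ from rfl, show (4:Fin 6)=(3:Fin 5).succ from rfl,
        show (4:Fin 5)=(3:Fin 4).succ from rfl, show (3:Fin 5)=(2:Fin 4).succ from rfl,
        Matrix.cons_val_succ]
    nlinarith [h5]
end

section
/- The map Π : Z⁴ → R × Z², sending (u,v,w,z) to ((2u + (√5-1)(v+w) + (3-√5)z)/(25+11√5), u, v), is an injective group homomorphism, and the set of first coordinates attained equals the subgroup ((5-√5)/10)Z + (√5/5)Z of R. -/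
/-!
With `φ` the golden ratio, `φ⁻¹ = (√5 - 1)/2`, `φ⁻² = (3 - √5)/2` and `25 + 11√5 = 2√5 φ⁵`, so the
first coordinate is `(u φ⁻⁵ + (v + w) φ⁻⁶ + z φ⁻⁷) / √5`. The target group is `ℤ[φ] / √5` with
basis `(5 - √5)/10 = 1/(√5 φ)` and `√5/5 = 1/√5`. Since `φ⁻⁵` is a unit of `ℤ[φ]`, the coordinates
in this basis are Fibonacci combinations of `u`, `v + w`, `z`, and every lattice point is already
hit with `w = z = 0`. Injectivity: `u` and `v` are read off, and the lattice coordinates, unique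
because `√5` is irrational, then determine `w` and `z` through a unimodular system.
-/

open Real

lemma Irrational.eq_and_eq_of_intCast_add_mul_eq {x : ℝ} (hx : Irrational x) {a b c d : ℤ}
    (h : a + b * x = c + d * x) : a = c ∧ b = d := by
  have hbd : b = d := by
    by_contra hne
    refine (hx.intCast_mul (sub_ne_zero.mpr hne)).ne_int (c - a) ?_
    push_cast
    linarith
  subst hbd
  exact ⟨by exact_mod_cast add_right_cancel h, rfl⟩

lemma irrational_sqrt_five : Irrational √5 := by
  simpa using Nat.prime_five.irrational_sqrt

noncomputable def latticePoint (n m : ℤ) : ℝ := (5 - √5) / 10 * n + √5 / 5 * m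

lemma latticePoint_injective2 : Function.Injective2 latticePoint := by
  intro n n' m m' h
  unfold latticePoint at h
  have h' : ((5 * n : ℤ) : ℝ) + ((2 * m - n : ℤ) : ℝ) * √5 =
      ((5 * n' : ℤ) : ℝ) + ((2 * m' - n' : ℤ) : ℝ) * √5 := by
    push_cast
    linarith
  have := irrational_sqrt_five.eq_and_eq_of_intCast_add_mul_eq h'
  omega

noncomputable def piFst (u v w z : ℤ) : ℝ :=
  (2 * u + (√5 - 1) * (v + w) + (3 - √5) * z) / (25 + 11 * √5)

lemma piFst_add (u v w z u' v' w' z' : ℤ) :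
    piFst (u + u') (v + v') (w + w') (z + z') = piFst u v w z + piFst u' v' w' z' := by
  unfold piFst
  push_cast
  ring

lemma piFst_eq_latticePoint (u v w z : ℤ) :
    piFst u v w z =
      latticePoint (5 * u - 8 * (v + w) + 13 * z) (-3 * u + 5 * (v + w) - 8 * z) := by
  have hs : √5 ^ 2 = 5 := sq_sqrt (by norm_num)
  unfold piFst latticePoint
  rw [div_eq_iff (by positivity)]
  push_cast
  linear_combination -11 * (-11 * u + 18 * (v + w) - 29 * z : ℝ) / 10 * hs

theorem Pi_injective_hom_image
    (Pi : ℤ × ℤ × ℤ × ℤ → ℝ × ℤ × ℤ)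
    (hPi : ∀ u v w z : ℤ, Pi (u, v, w, z) =
      ((2 * u + (Real.sqrt 5 - 1) * (v + w) + (3 - Real.sqrt 5) * z) /
        (25 + 11 * Real.sqrt 5), u, v)) :
    Function.Injective Pi ∧
    (∀ a b : ℤ × ℤ × ℤ × ℤ, Pi (a + b) = Pi a + Pi b) ∧
    {r : ℝ | ∃ p : ℤ × ℤ × ℤ × ℤ, (Pi p).1 = r} =
      {r : ℝ | ∃ n m : ℤ,
        r = ((5 - Real.sqrt 5) / 10) * n + (Real.sqrt 5 / 5) * m} := by
  replace hPi : ∀ u v w z, Pi (u, v, w, z) = (piFst u v w z, u, v) := hPi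
  refine ⟨?_, ?_, ?_⟩
  · rintro ⟨u, v, w, z⟩ ⟨u', v', w', z'⟩ h
    simp only [hPi, Prod.mk.injEq, piFst_eq_latticePoint] at h
    obtain ⟨hfst, rfl, rfl⟩ := h
    have hcoords := latticePoint_injective2 hfst
    obtain ⟨rfl, rfl⟩ : w = w' ∧ z = z' := by omega
    rfl
  · rintro ⟨u, v, w, z⟩ ⟨u', v', w', z'⟩
    simp only [Prod.mk_add_mk, hPi, piFst_add]
  · ext r
    constructor
    · rintro ⟨⟨u, v, w, z⟩, rfl⟩
      exact ⟨_, _, by rw [hPi, piFst_eq_latticePoint]; rfl⟩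
    · rintro ⟨n, m, rfl⟩
      refine ⟨(5 * n + 8 * m, 3 * n + 5 * m, 0, 0), ?_⟩
      rw [hPi]
      change piFst _ _ 0 0 = latticePoint n m
      rw [piFst_eq_latticePoint]
      congr 1 <;> ring
end
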